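/- arXiv:math/0211345 — 6 statements merged into one kernel-verified Lean document; each statement's English description precedes it below -/
import Mathlib

section
/- Let Q be a unital quantale with unit e, S a complete lattice, and r : Q → Q(S) a pre-unital representation, i.e., x ≤ r(e)(x) for all x ∈ S. Then r is irreducible (for every x ∈ S, r(⊤_Q)(x) ≤ x implies x = ⊥_S or x = ⊤_S) if and only if r is strong (r(⊤_Q)(x) = ⊤_S for every x ≠ ⊥_S). -/
/-! Since `e ≤ ⊤` and `⊤ ∘ ⊤ ≤ ⊤`, the map `r ⊤` is inflationary and `r ⊤ (r ⊤ x) ≤ r ⊤ x`.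
Hence `r ⊤ x` is always a prefixed point of `r ⊤`; irreducibility forces it to be `⊥` or `⊤`,
and `⊥` is excluded for `x ≠ ⊥` because `x ≤ r ⊤ x`. -/

theorem monotone_of_map_sSup {α β : Type*} [CompleteLattice α] [CompleteLattice β] {f : α → β}
    (hf : ∀ s : Set α, f (sSup s) = ⨆ a ∈ s, f a) : Monotone f :=
  OrderHomClass.mono (⟨f, fun s => by rw [hf, sSup_image]⟩ : sSupHom α β)

theorem forall_prefixed_eq_bot_or_eq_top_iff {S : Type*} [PartialOrder S] [BoundedOrder S]
    {c : S → S} (hinfl : ∀ x, x ≤ c x) (hidem : ∀ x, c (c x) ≤ c x) :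
    (∀ x, c x ≤ x → x = ⊥ ∨ x = ⊤) ↔ ∀ x, x ≠ ⊥ → c x = ⊤ := by
  constructor
  · intro hirr x hx
    refine (hirr (c x) (hidem x)).resolve_left fun hbot => hx ?_
    exact le_bot_iff.mp (hbot ▸ hinfl x)
  · intro hstrong x hle
    by_cases hx : x = ⊥
    · exact .inl hx
    · exact .inr (top_le_iff.mp (hstrong x hx ▸ hle))

theorem preunital_representation_irreducible_iff_strong_general
    {Q S : Type*} [CompleteLattice Q] [CompleteLattice S]
    (mul : Q → Q → Q) (e : Q)
    (r : Q → S → S)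
    (hrQ : ∀ (s : Set Q) (x : S), r (sSup s) x = ⨆ a ∈ s, r a x)
    (hrmul : ∀ (a b : Q) (x : S), r (mul a b) x = r b (r a x))
    (hpreunital : ∀ x : S, x ≤ r e x) :
    (∀ x : S, r ⊤ x ≤ x → x = ⊥ ∨ x = ⊤) ↔ (∀ x : S, x ≠ ⊥ → r ⊤ x = ⊤) := by
  have hmono (x : S) : Monotone (r · x) := monotone_of_map_sSup (hrQ · x)
  refine forall_prefixed_eq_bot_or_eq_top_iff (fun x => ?_) (fun x => ?_)
  · exact (hpreunital x).trans (hmono x le_top)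
  · rw [← hrmul]
    exact hmono x le_top

/-- For a unital quantale `Q` with unit `e` and a pre-unital representation
`r` of `Q` on a complete lattice `S` (i.e. `x ≤ r e x` for all `x`), the representation is
irreducible (`r ⊤ x ≤ x` implies `x = ⊥` or `x = ⊤`) iff it is strong
(`r ⊤ x = ⊤` for every `x ≠ ⊥`). -/
theorem preunital_representation_irreducible_iff_strong
    {Q S : Type*} [CompleteLattice Q] [CompleteLattice S]
    (mul : Q → Q → Q) (e : Q)
    (hassoc : ∀ a b c : Q, mul (mul a b) c = mul a (mul b c))
    (hdistl : ∀ (a : Q) (s : Set Q), mul a (sSup s) = ⨆ b ∈ s, mul a b)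
    (hdistr : ∀ (s : Set Q) (b : Q), mul (sSup s) b = ⨆ a ∈ s, mul a b)
    (hel : ∀ a : Q, mul e a = a) (her : ∀ a : Q, mul a e = a)
    (r : Q → S → S)
    (hrS : ∀ (a : Q) (s : Set S), r a (sSup s) = ⨆ x ∈ s, r a x)
    (hrQ : ∀ (s : Set Q) (x : S), r (sSup s) x = ⨆ a ∈ s, r a x)
    (hrmul : ∀ (a b : Q) (x : S), r (mul a b) x = r b (r a x))
    (hpreunital : ∀ x : S, x ≤ r e x) :
    (∀ x : S, r ⊤ x ≤ x → x = ⊥ ∨ x = ⊤) ↔ (∀ x : S, x ≠ ⊥ → r ⊤ x = ⊤) :=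
  preunital_representation_irreducible_iff_strong_general mul e r hrQ hrmul hpreunital
end

section
/- Let Q be a quantale. Then Q is spatial with respect to irreducible representations (i.e., for all a, b ∈ Q, a = b whenever p(a) = p(b) for every complete lattice S and every irreducible representation p : Q → Q(S)) if and only if every element a ∈ Q is a meet of prime elements, i.e., a = ⨅{p ∈ Q : p is prime and a ≤ p}. -/
/-!
A prime `q` gives an irreducible representation: `Q` acts on `(Q × Prop)ᵒᵈ` by residuation,
`c · (x, f) = (c ⇨ᵣ x, c ≤ x)`, and primality of `q` makes the submodule generated by `(q, True)`
irreducible. Acting on `(q, True)` reads off whether `a ≤ q`, so when every element is a meet of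
primes, irreducible representations separate elements. Conversely, for an irreducible `ρ` and
`x, y ∈ S` the element `⨆ {d | ρ d x ≤ y}` is prime; taking `y = ρ a x` shows that `ρ` cannot
distinguish `a` from the meet of the primes above it.
-/

universe u

namespace Quantale

open OrderDual

section Representation

variable {Q S : Type*} [Mul Q] [CompleteLattice Q] [CompleteLattice S]

def IsPrime (p : Q) : Prop := ∀ a b : Q, a * (⊤ * b) ≤ p → a ≤ p ∨ b ≤ p

structure IsRepresentation (ρ : Q → S → S) : Prop where
  map_sSup : ∀ (c : Q) (s : Set S), ρ c (sSup s) = ⨆ x ∈ s, ρ c x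
  sSup_map : ∀ (s : Set Q) (x : S), ρ (sSup s) x = ⨆ c ∈ s, ρ c x
  map_mul : ∀ (c d : Q) (x : S), ρ (c * d) x = ρ d (ρ c x)

structure IsIrreducibleRepresentation (ρ : Q → S → S) : Prop extends IsRepresentation ρ where
  eq_bot_or_eq_top_of_le : ∀ x : S, ρ ⊤ x ≤ x → x = ⊥ ∨ x = ⊤

namespace IsRepresentation

variable {ρ : Q → S → S} (hρ : IsRepresentation ρ)
include hρ

def actHom (c : Q) : sSupHom S S := ⟨ρ c, fun s => (hρ.map_sSup c s).trans sSup_image.symm⟩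

def evalHom (x : S) : sSupHom Q S := ⟨(ρ · x), fun s => (hρ.sSup_map s x).trans sSup_image.symm⟩

theorem map_sup (c : Q) (x y : S) : ρ c (x ⊔ y) = ρ c x ⊔ ρ c y :=
  SupHomClass.map_sup (hρ.actHom c) x y

theorem map_iSup {ι : Sort*} (c : Q) (f : ι → S) : ρ c (⨆ i, f i) = ⨆ i, ρ c (f i) :=
  _root_.map_iSup (hρ.actHom c) f

theorem sup_map (c d : Q) (x : S) : ρ (c ⊔ d) x = ρ c x ⊔ ρ d x :=
  SupHomClass.map_sup (hρ.evalHom x) c d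

theorem iSup_map {ι : Sort*} (f : ι → Q) (x : S) : ρ (⨆ i, f i) x = ⨆ i, ρ (f i) x :=
  _root_.map_iSup (hρ.evalHom x) f

theorem bot_map (x : S) : ρ ⊥ x = ⊥ := BotHomClass.map_bot (hρ.evalHom x)

theorem monotone_act (c : Q) : Monotone (ρ c) := OrderHomClass.mono (hρ.actHom c)

theorem monotone_eval (x : S) : Monotone (ρ · x) := OrderHomClass.mono (hρ.evalHom x)

theorem act_sSup_setOf_act_le (x y : S) : ρ (sSup {d | ρ d x ≤ y}) x ≤ y := by
  rw [hρ.sSup_map]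
  exact iSup₂_le fun _ hd => hd

end IsRepresentation

namespace IsIrreducibleRepresentation

variable {ρ : Q → S → S} (hρ : IsIrreducibleRepresentation ρ)
include hρ

theorem isPrime_sSup_setOf_act_le (x y : S) : IsPrime (sSup {d | ρ d x ≤ y}) := by
  intro u v huv
  set w := ρ u x
  have hvw : ρ v (ρ ⊤ w) ≤ y := by
    have : ρ (u * (⊤ * v)) x ≤ y := (hρ.monotone_eval x huv).trans (hρ.act_sSup_setOf_act_le x y)
    rwa [hρ.map_mul, hρ.map_mul] at this
  have hstable : ρ ⊤ (ρ ⊤ w) ≤ ρ ⊤ w := by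
    rw [← hρ.map_mul]
    exact hρ.monotone_eval w le_top
  rcases hρ.eq_bot_or_eq_top_of_le _ hstable with h | h
  · refine .inl (le_sSup (show w ≤ y from ?_))
    rcases hρ.eq_bot_or_eq_top_of_le w (h ▸ bot_le) with hw | hw
    · exact hw.symm ▸ bot_le
    · calc w ≤ ρ ⊤ x := hρ.monotone_eval x le_top
        _ ≤ ρ ⊤ w := hρ.monotone_act ⊤ (hw ▸ le_top)
        _ = ⊥ := h
        _ ≤ y := bot_le
  · exact .inr (le_sSup ((hρ.monotone_act v (h ▸ le_top)).trans hvw))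

theorem act_sInf_isPrime (a : Q) : ρ (sInf {p | IsPrime p ∧ a ≤ p}) = ρ a := by
  funext x
  refine le_antisymm ?_ (hρ.monotone_eval x (le_sInf fun _ hp => hp.2))
  calc ρ (sInf {p | IsPrime p ∧ a ≤ p}) x ≤ ρ (sSup {d | ρ d x ≤ ρ a x}) x :=
        hρ.monotone_eval x (sInf_le ⟨hρ.isPrime_sSup_setOf_act_le x _, le_sSup le_rfl⟩)
    _ ≤ ρ a x := hρ.act_sSup_setOf_act_le x _

end IsIrreducibleRepresentation

end Representation

def IsSpatial (Q : Type u) [Mul Q] [CompleteLattice Q] : Prop :=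
  ∀ a b : Q, (∀ (S : Type u) [CompleteLattice S] (ρ : Q → S → S),
    IsIrreducibleRepresentation ρ → ρ a = ρ b) → a = b

theorem IsSpatial.eq_sInf_isPrime {Q : Type u} [Mul Q] [CompleteLattice Q] (hQ : IsSpatial Q)
    (a : Q) : a = sInf {p | IsPrime p ∧ a ≤ p} :=
  hQ _ _ fun _ _ _ hρ => (hρ.act_sInf_isPrime a).symm

section Span

variable {Q M : Type*} [Mul Q] [CompleteLattice Q] [CompleteLattice M]

/-- `(z, e)` stands for `z ⊔ e • 1` in the unitization of `Q`. -/
def unitizedAct (ρ : Q → M → M) (u : Q × Prop) (x : M) : M := ρ u.1 x ⊔ ⨆ _ : u.2, x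

def span (ρ : Q → M → M) (x : M) : Set M := Set.range (unitizedAct ρ · x)

namespace IsRepresentation

variable {ρ : Q → M → M} (hρ : IsRepresentation ρ)
include hρ

theorem unitizedAct_sSup (B : Set (Q × Prop)) (x : M) :
    unitizedAct ρ (sSup B) x = ⨆ u ∈ B, unitizedAct ρ u x := by
  simp only [unitizedAct, Prod.fst_sSup, Prod.snd_sSup, hρ.sSup_map, sSup_Prop_eq, iSup_exists,
    iSup_and, iSup_image, iSup_sup_eq]

theorem act_unitizedAct (c : Q) (u : Q × Prop) (x : M) :
    ρ c (unitizedAct ρ u x) = unitizedAct ρ (u.1 * c ⊔ ⨆ _ : u.2, c, False) x := by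
  simp [unitizedAct, hρ.map_sup, hρ.map_iSup, hρ.sup_map, hρ.iSup_map, hρ.map_mul]

theorem mem_span_self (x : M) : x ∈ span ρ x :=
  ⟨(⊥, True), by simp [unitizedAct, hρ.bot_map]⟩

theorem sSup_mem_span (x : M) {A : Set M} (hA : A ⊆ span ρ x) : sSup A ∈ span ρ x := by
  refine ⟨sSup ((fun u => unitizedAct ρ u x) ⁻¹' A), ?_⟩
  show unitizedAct ρ (sSup _) x = _
  rw [hρ.unitizedAct_sSup, ← sSup_image, Set.image_preimage_eq_of_subset hA]

theorem act_mem_span (c : Q) {x y : M} (hy : y ∈ span ρ x) : ρ c y ∈ span ρ x := by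
  obtain ⟨u, rfl⟩ := hy
  exact ⟨_, (hρ.act_unitizedAct c u x).symm⟩

end IsRepresentation

end Span

section Subrepresentation

variable {Q M : Type*} [Mul Q] [CompleteLattice Q] [CompleteLattice M]

abbrev completeLatticeOfSSupClosed {P : Set M} (hP : ∀ A ⊆ P, sSup A ∈ P) : CompleteLattice P :=
  @completeLatticeOfSup P _
    ⟨fun A => ⟨sSup (Subtype.val '' A), hP _ (Subtype.coe_image_subset P A)⟩⟩
    fun _ => ⟨fun _ hx => le_sSup (Set.mem_image_of_mem _ hx),
      fun _ hy => sSup_le (Set.forall_mem_image.2 fun _ hx => hy hx)⟩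

theorem val_iSup_of_sSupClosed {P : Set M} (hP : ∀ A ⊆ P, sSup A ∈ P) {ι : Sort*} (f : ι → P) :
    letI := completeLatticeOfSSupClosed hP
    (⨆ i, f i).val = ⨆ i, (f i).val :=
  congrArg sSup (Set.range_comp Subtype.val f).symm

theorem IsRepresentation.restrict {ρ : Q → M → M} (hρ : IsRepresentation ρ) {P : Set M}
    (hP : ∀ A ⊆ P, sSup A ∈ P) (hact : ∀ c, ∀ x ∈ P, ρ c x ∈ P) :
    letI := completeLatticeOfSSupClosed hP
    IsRepresentation fun c (x : P) => (⟨ρ c x, hact c x x.2⟩ : P) := by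
  let := completeLatticeOfSSupClosed hP
  have val_sSup : ∀ A : Set P, (sSup A).val = sSup (Subtype.val '' A) := fun _ => rfl
  refine ⟨fun c A => ?_, fun s x => ?_, fun c d x => Subtype.ext (hρ.map_mul c d x)⟩
  · apply Subtype.ext
    simp only [val_iSup_of_sSupClosed, val_sSup, hρ.map_sSup, iSup_image]
  · apply Subtype.ext
    simp only [val_iSup_of_sSupClosed, hρ.sSup_map]

end Subrepresentation

section Residual

variable {Q : Type*} [Semigroup Q] [CompleteLattice Q]

/-- The second coordinate is the residual of the adjoined unit; it is what lets the representation
detect `c ≤ q` when `Q` has no unit. -/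
def residualRep (c : Q) (m : (Q × Prop)ᵒᵈ) : (Q × Prop)ᵒᵈ :=
  toDual (c ⇨ᵣ (ofDual m).1, c ≤ (ofDual m).1)

theorem ofDual_unitizedAct_residualRep (q : Q) (u : Q × Prop) :
    ofDual (unitizedAct residualRep u (toDual (q, True))) =
      ((u.1 ⇨ᵣ q) ⊓ ⨅ _ : u.2, q, u.1 ≤ q) := by
  ext
  · simp only [unitizedAct, residualRep, ofDual_sup, ofDual_iSup, ofDual_toDual, Prod.fst_inf,
      Prod.fst_iInf]
  · simp [unitizedAct, residualRep, Prod.snd_iInf]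

variable [IsQuantale Q]

theorem mul_rightMulResiduation (c d x : Q) : (c * d) ⇨ᵣ x = d ⇨ᵣ (c ⇨ᵣ x) :=
  eq_of_forall_le_iff fun y => by simp only [rightMulResiduation_le_iff_mul_le, mul_assoc]

theorem rightMulResiduation_iInf {ι : Sort*} (c : Q) (f : ι → Q) :
    c ⇨ᵣ ⨅ i, f i = ⨅ i, c ⇨ᵣ f i :=
  eq_of_forall_le_iff fun y => by simp only [rightMulResiduation_le_iff_mul_le, le_iInf_iff]

theorem iSup_rightMulResiduation {ι : Sort*} (f : ι → Q) (x : Q) :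
    (⨆ i, f i) ⇨ᵣ x = ⨅ i, f i ⇨ᵣ x :=
  eq_of_forall_le_iff fun y => by
    rw [rightMulResiduation_le_iff_mul_le, iSup, sSup_mul_distrib, iSup_range]
    simp only [iSup_le_iff, le_iInf_iff, rightMulResiduation_le_iff_mul_le]

theorem isRepresentation_residualRep : IsRepresentation (residualRep (Q := Q)) where
  map_sSup c A := by
    apply OrderDual.ofDual.injective
    ext
    · simp [residualRep, sSup_eq_iSup, rightMulResiduation_iInf, Prod.fst_iInf]
    · simp [residualRep, sSup_eq_iSup, Prod.fst_iInf, Prod.snd_iInf]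
  sSup_map C m := by
    apply OrderDual.ofDual.injective
    ext
    · simp [residualRep, sSup_eq_iSup, iSup_rightMulResiduation, Prod.fst_iInf]
    · simp [residualRep, sSup_eq_iSup, Prod.snd_iInf]
  map_mul c d m := by
    apply OrderDual.ofDual.injective
    ext
    · simp [residualRep, mul_rightMulResiduation]
    · simp [residualRep, rightMulResiduation_le_iff_mul_le]

end Residual

section Prime

variable {Q : Type*} [Semigroup Q] [CompleteLattice Q] [IsQuantale Q]

theorem IsPrime.le_of_mul_le {q x z : Q} (hq : IsPrime q) (hz : ¬z ≤ q) (hx : ⊤ * x ≤ x)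
    (hzx : z * x ≤ q) : x ≤ q :=
  (hq z x ((mul_le_mul_right hx z).trans hzx)).resolve_left hz

abbrev primeSpan (q : Q) : Set (Q × Prop)ᵒᵈ := span residualRep (toDual (q, True))

instance (q : Q) : CompleteLattice (primeSpan q) :=
  completeLatticeOfSSupClosed fun _ => isRepresentation_residualRep.sSup_mem_span _

def primeRep (q c : Q) (x : primeSpan q) : primeSpan q :=
  ⟨residualRep c x, isRepresentation_residualRep.act_mem_span c x.2⟩

theorem isRepresentation_primeRep (q : Q) : IsRepresentation (primeRep q) :=
  isRepresentation_residualRep.restrict (fun _ => isRepresentation_residualRep.sSup_mem_span _)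
    fun c _ hx => isRepresentation_residualRep.act_mem_span c hx

theorem IsPrime.isIrreducibleRepresentation_primeRep {q : Q} (hq : IsPrime q) :
    IsIrreducibleRepresentation (primeRep q) := by
  refine ⟨isRepresentation_primeRep q, fun s hs => ?_⟩
  obtain ⟨⟨z, e⟩, hu⟩ := s.2
  set x := (z ⇨ᵣ q) ⊓ ⨅ _ : e, q
  have hs_val : ofDual s.val = (x, z ≤ q) := hu ▸ ofDual_unitizedAct_residualRep q (z, e)
  have hstable : x ≤ ⊤ ⇨ᵣ x ∧ (z ≤ q → ⊤ ≤ x) := by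
    have : ofDual s.val ≤ ofDual (residualRep ⊤ s.val) := hs
    simpa [residualRep, hs_val] using this
  -- If `z ≤ q`, stability forces `x = ⊤`, so `s` is the bottom of the dual order; otherwise
  -- primality gives `x ≤ q` and `⊤ * x ≤ q`, so `x` lies below the first coordinate of every
  -- element of the span and `s` is its top.
  by_cases hz : z ≤ q
  · have : ofDual s.val = ⊤ := hs_val.trans (Prod.ext (top_unique (hstable.2 hz)) (eq_true hz))
    exact .inl (le_bot_iff.mp
      (show ofDual (⊥ : primeSpan q).val ≤ ofDual s.val from this ▸ le_top))
  · have hx : ⊤ * x ≤ x := rightMulResiduation_le_iff_mul_le.mp hstable.1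
    have hzx : z * x ≤ q := rightMulResiduation_le_iff_mul_le.mp inf_le_left
    have hxq : x ≤ q := hq.le_of_mul_le hz hx hzx
    have htxq : ⊤ * x ≤ q :=
      hq.le_of_mul_le hz (mul_le_mul_right hx ⊤) ((mul_le_mul_right hx z).trans hzx)
    obtain ⟨⟨z', e'⟩, htop⟩ := (⊤ : primeSpan q).2
    refine .inr (top_unique (show ofDual s.val ≤ ofDual (⊤ : primeSpan q).val from ?_))
    rw [hs_val, ← htop, ofDual_unitizedAct_residualRep]
    exact ⟨le_inf (rightMulResiduation_le_iff_mul_le.mpr ((mul_le_mul_left le_top x).trans htxq))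
      (le_iInf fun _ => hxq), fun h => absurd h hz⟩

theorem le_iff_le_of_primeRep_eq {q a b : Q} (h : primeRep q a = primeRep q b) :
    a ≤ q ↔ b ≤ q :=
  Iff.of_eq (congrArg
    (fun ρ => (ofDual (ρ ⟨_, isRepresentation_residualRep.mem_span_self _⟩).val).2) h)

end Prime

theorem isSpatial_of_forall_eq_sInf_isPrime {Q : Type u} [Semigroup Q] [CompleteLattice Q]
    [IsQuantale Q] (h : ∀ a : Q, a = sInf {p | IsPrime p ∧ a ≤ p}) : IsSpatial Q := by
  intro a b hab
  rw [h a, h b]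
  congr 1
  ext p
  exact and_congr_right fun hp =>
    le_iff_le_of_primeRep_eq (hab _ _ hp.isIrreducibleRepresentation_primeRep)

theorem isSpatial_iff_forall_eq_sInf_isPrime {Q : Type u} [Semigroup Q] [CompleteLattice Q]
    [IsQuantale Q] : IsSpatial Q ↔ ∀ a : Q, a = sInf {p | IsPrime p ∧ a ≤ p} :=
  ⟨IsSpatial.eq_sInf_isPrime, isSpatial_of_forall_eq_sInf_isPrime⟩

end Quantale

/-- Kruml: A quantale `Q` is spatial with respect to irreducible
representations (irreducible representations on complete lattices separate the elements
of `Q`) if and only if every element of `Q` is the meet of the prime elements above it. -/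
theorem quantale_spatial_iff_every_element_meet_of_primes
    {Q : Type u} [CompleteLattice Q]
    (mul : Q → Q → Q)
    (hassoc : ∀ a b c : Q, mul (mul a b) c = mul a (mul b c))
    (hdistl : ∀ (a : Q) (s : Set Q), mul a (sSup s) = ⨆ b ∈ s, mul a b)
    (hdistr : ∀ (s : Set Q) (b : Q), mul (sSup s) b = ⨆ a ∈ s, mul a b) :
    (∀ a b : Q,
        (∀ (S : Type u) [CompleteLattice S] (p : Q → S → S),
          (∀ (c : Q) (s : Set S), p c (sSup s) = ⨆ x ∈ s, p c x) →
          (∀ (s : Set Q) (x : S), p (sSup s) x = ⨆ c ∈ s, p c x) →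
          (∀ (c d : Q) (x : S), p (mul c d) x = p d (p c x)) →
          (∀ x : S, p ⊤ x ≤ x → x = ⊥ ∨ x = ⊤) →
          p a = p b) →
        a = b) ↔
      (∀ a : Q,
        a = sInf {p : Q | (∀ c d : Q, mul c (mul ⊤ d) ≤ p → c ≤ p ∨ d ≤ p) ∧ a ≤ p}) := by
  let _ : Semigroup Q := { mul, mul_assoc := hassoc }
  have _ : IsQuantale Q := ⟨hdistl, hdistr⟩
  refine Iff.trans ⟨fun h a b hab => h a b fun S _ ρ h₁ h₂ h₃ h₄ => hab S ρ ⟨⟨h₁, h₂, h₃⟩, h₄⟩,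
    fun h a b hab => h a b fun S _ ρ hρ => hab S ρ hρ.map_sSup hρ.sSup_map hρ.map_mul
      hρ.eq_bot_or_eq_top_of_le⟩ Quantale.isSpatial_iff_forall_eq_sInf_isPrime
end

section
/- Let A be a commutative unital C*-algebra and let a, b ∈ Max A. Then p(a) = p(b) for every complete lattice S and every irreducible representation p : Max A → Q(S) if and only if ⊤∘a∘⊤ = ⊤∘b∘⊤ in Max A (where ⊤ = A is the top of Max A, so ⊤∘a∘⊤ is the closure of the linear span of AaA, the least closed two-sided ideal of A containing a). In other words, the spatialization of Max A with respect to all irreducible representations is the locale of closed two-sided ideals of A, with quotient map a ↦ ⊤∘a∘⊤. -/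
universe u

variable (A : Type u) [NormedCommRing A] [StarRing A] [CStarRing A] [CompleteSpace A]
  [NormedAlgebra ℂ A] [StarModule ℂ A]

/-- The elements of `Max A`: the closed linear subspaces of the C*-algebra `A`. -/
abbrev MaxOf := {M : Submodule ℂ A // IsClosed (M : Set A)}

variable {A}

noncomputable instance : InfSet (MaxOf A) :=
  ⟨fun s =>
    ⟨sInf ((fun M : MaxOf A => M.1) '' s), by
      rw [Submodule.coe_sInf]
      exact isClosed_biInter fun M hM => by
        obtain ⟨N, _, rfl⟩ := hM
        exact N.2⟩⟩

/-- `Max A` is a complete lattice (meets are intersections; joins are the closures of the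
sums of subspaces). -/
noncomputable instance : CompleteLattice (MaxOf A) :=
  completeLatticeOfInf _ fun s =>
    ⟨fun M hM => Subtype.coe_le_coe.mp (sInf_le ⟨M, hM, rfl⟩),
     fun N hN => Subtype.coe_le_coe.mp (le_sInf fun P hP => by
        obtain ⟨M, hM, rfl⟩ := hP
        exact hN hM)⟩

/-- The quantale multiplication of `Max A`: `M∘N` is the closure of the linear span of the
products. -/
noncomputable def qmul (M N : MaxOf A) : MaxOf A :=
  ⟨(M.1 * N.1).topologicalClosure, Submodule.isClosed_topologicalClosure _⟩

/-!
For a character `χ`, the kernel `ker χ` is prime in `Max A` (`c∘d ≤ ker χ` iff `c ≤ ker χ` or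
`d ≤ ker χ`), so letting `c` act on the two-point lattice as the identity when `c ≰ ker χ` and as
`⊥` otherwise is an irreducible representation. Hence representations that identify `a` and `b`
see the same character kernels above `a` and `b`; closed ideals being intersections of character
kernels, `⊤∘a∘⊤ = ⊤∘b∘⊤`.

Conversely, let `r` be irreducible with `r(⊤)(⊤) = ⊤` (otherwise `r` vanishes). If `r(e)(y) = y ≠ ⊥`,
the annihilator `W` of `y` is a closed ideal with `c∘⊤∘d ≤ W → c ≤ W ∨ d ≤ W`, because `r(⊤)` sends
every nonzero element to `⊤`. Two distinct characters vanishing on `W` would yield, by Urysohn and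
Gelfand duality, elements `u v ∉ W` with `u v = 0`; so `W` contains some `ker χ`, and
`⊤ = ker χ ∨ e` acts on `y` as the identity, whence `y = ⊤`. Thus `r(e)` only takes the values `⊥`
and `⊤`, and `r(c)(⊤) = r(⊤∘c∘⊤)(⊤)`, so `r(c)` depends only on `⊤∘c∘⊤`.
-/

open WeakDual

section Algebraic

-- This `A`, an arbitrary commutative normed `ℂ`-algebra, shadows the C⋆-algebra `A` above.
variable {A : Type*} [NormedCommRing A] [NormedAlgebra ℂ A]

namespace MaxOf

lemma coe_top : ((⊤ : MaxOf A).1 : Submodule ℂ A) = ⊤ :=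
  top_le_iff.mp (show (⟨⊤, isClosed_univ⟩ : MaxOf A) ≤ ⊤ from le_top)

lemma coe_bot : ((⊥ : MaxOf A).1 : Submodule ℂ A) = ⊥ :=
  le_bot_iff.mp (show (⊥ : MaxOf A) ≤ ⟨⊥, isClosed_singleton⟩ from bot_le)

lemma mem_top (f : A) : f ∈ (⊤ : MaxOf A).1 := by rw [coe_top]; trivial

noncomputable def spanSingleton (u : A) : MaxOf A :=
  ⟨Submodule.span ℂ {u}, (Submodule.span ℂ {u}).closed_of_finiteDimensional⟩

lemma spanSingleton_le_iff {u : A} {M : MaxOf A} : spanSingleton u ≤ M ↔ u ∈ M.1 :=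
  Submodule.span_singleton_le_iff_mem u M.1

noncomputable def unit : MaxOf A := spanSingleton 1

lemma one_mem_unit : (1 : A) ∈ (unit : MaxOf A).1 := Submodule.mem_span_singleton_self 1

lemma qmul_le {M N C : MaxOf A} (h : ∀ m ∈ M.1, ∀ n ∈ N.1, m * n ∈ C.1) : qmul M N ≤ C :=
  Submodule.topologicalClosure_minimal _ (Submodule.mul_le.mpr h) C.2

lemma mul_mem_qmul {M N : MaxOf A} {f g : A} (hf : f ∈ M.1) (hg : g ∈ N.1) :
    f * g ∈ (qmul M N).1 :=
  (M.1 * N.1).le_topologicalClosure (Submodule.mul_mem_mul hf hg)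

lemma qmul_top_top : qmul (⊤ : MaxOf A) ⊤ = ⊤ :=
  top_le_iff.mp fun f _ => by simpa using mul_mem_qmul (mem_top f) (mem_top (1 : A))

lemma qmul_unit (c : MaxOf A) : qmul c unit = c := by
  refine le_antisymm (qmul_le fun m hm n hn => ?_) fun f hf => ?_
  · obtain ⟨α, rfl⟩ := Submodule.mem_span_singleton.mp hn
    simpa [mul_smul_comm] using c.1.smul_mem α hm
  · simpa using mul_mem_qmul hf one_mem_unit

lemma unit_qmul (c : MaxOf A) : qmul unit c = c := by
  refine le_antisymm (qmul_le fun m hm n hn => ?_) fun f hf => ?_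
  · obtain ⟨α, rfl⟩ := Submodule.mem_span_singleton.mp hm
    simpa [smul_mul_assoc] using c.1.smul_mem α hn
  · simpa using mul_mem_qmul one_mem_unit hf

def IsIdeal (j : MaxOf A) : Prop := ∀ (g : A) {f : A}, f ∈ j.1 → g * f ∈ j.1

def IsIdeal.toIdeal {j : MaxOf A} (hj : IsIdeal j) : Ideal A :=
  { j.1.toAddSubmonoid with smul_mem' := hj }

@[simp]
lemma IsIdeal.mem_toIdeal {j : MaxOf A} (hj : IsIdeal j) {f : A} : f ∈ hj.toIdeal ↔ f ∈ j.1 :=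
  Iff.rfl

lemma isIdeal_of_qmul_top_le {j : MaxOf A} (h : qmul j ⊤ ≤ j) : IsIdeal j := fun g f hf =>
  mul_comm f g ▸ h (mul_mem_qmul hf (mem_top g))

lemma isIdeal_qmul_top (M : MaxOf A) : IsIdeal (qmul M ⊤) := by
  intro g f hf
  have hmaps : Set.MapsTo (g * ·) (M.1 * (⊤ : MaxOf A).1 : Set A) (M.1 * (⊤ : MaxOf A).1) :=
    fun x hx => Submodule.mul_induction_on hx
      (fun m hm n _ => by
        simp only [SetLike.mem_coe, mul_left_comm g m n]
        exact Submodule.mul_mem_mul hm (mem_top _))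
      (fun x y hx hy => by
        show g * (x + y) ∈ M.1 * (⊤ : MaxOf A).1
        rw [mul_add]
        exact add_mem hx hy)
  exact map_mem_closure (continuous_const_mul g) hf hmaps

lemma le_qmul_top_qmul_top (c : MaxOf A) : c ≤ qmul (qmul ⊤ c) ⊤ := fun f hf => by
  simpa using mul_mem_qmul (mul_mem_qmul (mem_top (1 : A)) hf) (mem_top (1 : A))

lemma IsIdeal.qmul_top_qmul_top_le_iff {j : MaxOf A} (hj : IsIdeal j) {c : MaxOf A} :
    qmul (qmul ⊤ c) ⊤ ≤ j ↔ c ≤ j := by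
  refine ⟨(le_qmul_top_qmul_top c).trans, fun hc => qmul_le fun m hm n _ => ?_⟩
  have hcj : qmul ⊤ c ≤ j := qmul_le fun g _ f hf => hj g (hc hf)
  exact mul_comm n m ▸ hj n (hcj hm)

lemma spanSingleton_qmul_top_qmul_spanSingleton_eq_bot {u v : A} (h : u * v = 0) :
    qmul (qmul (spanSingleton u) ⊤) (spanSingleton v) = ⊥ := by
  have hmaps : Set.MapsTo (· * v) ((spanSingleton u).1 * (⊤ : MaxOf A).1 : Set A) {0} :=
    fun x hx => Submodule.mul_induction_on hx
      (fun m hm g _ => by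
        obtain ⟨α, rfl⟩ := Submodule.mem_span_singleton.mp hm
        simp [mul_right_comm _ g v, h])
      (fun x y hx hy => by simp_all [add_mul])
  refine le_bot_iff.mp (qmul_le fun m hm n hn => ?_)
  obtain ⟨β, rfl⟩ := Submodule.mem_span_singleton.mp hn
  have hmv : m * v = 0 := by simpa using map_mem_closure (continuous_mul_const v) hm hmaps
  simp [coe_bot, hmv]

section Characters

variable (χ : characterSpace ℂ A)

noncomputable def charKer : MaxOf A :=
  ⟨LinearMap.ker (CharacterSpace.toAlgHom χ).toLinearMap,
    isClosed_singleton.preimage (map_continuous χ)⟩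

lemma mem_charKer {f : A} : f ∈ (charKer χ).1 ↔ χ f = 0 := LinearMap.mem_ker

lemma qmul_le_charKer_iff {c d : MaxOf A} :
    qmul c d ≤ charKer χ ↔ c ≤ charKer χ ∨ d ≤ charKer χ := by
  refine ⟨fun h => ?_, ?_⟩
  · by_contra! hcd
    obtain ⟨f, hfc, hf⟩ := (SetLike.not_le_iff_exists (p := c.1)).mp hcd.1
    obtain ⟨g, hgd, hg⟩ := (SetLike.not_le_iff_exists (p := d.1)).mp hcd.2
    rw [mem_charKer] at hf hg
    exact mul_ne_zero hf hg (by simpa using (mem_charKer χ).mp (h (mul_mem_qmul hfc hgd)))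
  · rintro (h | h) <;> refine qmul_le fun m hm n hn => ?_
    · simp [(mem_charKer χ).mp (h hm), mem_charKer]
    · simp [(mem_charKer χ).mp (h hn), mem_charKer]

lemma charKer_sup_unit : charKer χ ⊔ unit = ⊤ := by
  refine top_le_iff.mp fun f _ => ?_
  have hker : charKer χ ≤ charKer χ ⊔ unit := le_sup_left
  have hunit : unit ≤ charKer χ ⊔ unit := le_sup_right
  rw [← sub_add_cancel f (χ f • 1)]
  exact add_mem (hker (by simp [mem_charKer])) (hunit (unit.1.smul_mem _ one_mem_unit))

end Characters

end MaxOf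

variable (A) in
structure IrreducibleRep (S : Type*) [CompleteLattice S] where
  act : MaxOf A → S → S
  act_sSup : ∀ (c : MaxOf A) (s : Set S), act c (sSup s) = ⨆ x ∈ s, act c x
  sSup_act : ∀ (s : Set (MaxOf A)) (x : S), act (sSup s) x = ⨆ c ∈ s, act c x
  qmul_act : ∀ (c d : MaxOf A) (x : S), act (qmul c d) x = act d (act c x)
  irreducible : ∀ x : S, act ⊤ x ≤ x → x = ⊥ ∨ x = ⊤

namespace IrreducibleRep

open MaxOf

variable {S : Type*} [CompleteLattice S] (r : IrreducibleRep A S)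

lemma act_bot (c : MaxOf A) : r.act c ⊥ = ⊥ := by simpa using r.act_sSup c ∅

lemma act_sup (c : MaxOf A) (x y : S) : r.act c (x ⊔ y) = r.act c x ⊔ r.act c y := by
  rw [← sSup_pair, r.act_sSup, iSup_pair]

lemma sup_act (c d : MaxOf A) (x : S) : r.act (c ⊔ d) x = r.act c x ⊔ r.act d x := by
  rw [← sSup_pair, r.sSup_act, iSup_pair]

lemma act_mono_left {c d : MaxOf A} (h : c ≤ d) (x : S) : r.act c x ≤ r.act d x := by
  simpa [sup_of_le_right h] using (r.sup_act c d x).ge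

lemma act_mono_right (c : MaxOf A) {x y : S} (h : x ≤ y) : r.act c x ≤ r.act c y := by
  simpa [sup_of_le_right h] using (r.act_sup c x y).ge

lemma top_act_eq_bot_or_top (x : S) : r.act ⊤ x = ⊥ ∨ r.act ⊤ x = ⊤ :=
  r.irreducible _ (by rw [← r.qmul_act, qmul_top_top])

lemma top_act_eq_top (htop : r.act ⊤ ⊤ = ⊤) {x : S} (hx : x ≠ ⊥) : r.act ⊤ x = ⊤ := by
  refine (r.top_act_eq_bot_or_top x).resolve_left fun h => hx ?_
  rcases r.irreducible x (h ▸ bot_le) with hx | rfl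
  · exact hx
  · exact htop.symm.trans h

noncomputable def annihilator (y : S) : MaxOf A := sSup {c | r.act c y = ⊥}

lemma act_eq_bot_iff_le_annihilator {c : MaxOf A} {y : S} :
    r.act c y = ⊥ ↔ c ≤ r.annihilator y := by
  refine ⟨fun h => le_sSup h, fun h => le_bot_iff.mp ((r.act_mono_left h y).trans ?_)⟩
  rw [annihilator, r.sSup_act]
  exact iSup₂_le fun c hc => hc.le

lemma isIdeal_annihilator (y : S) : (r.annihilator y).IsIdeal := by
  refine isIdeal_of_qmul_top_le (r.act_eq_bot_iff_le_annihilator.mp ?_)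
  rw [r.qmul_act, r.act_eq_bot_iff_le_annihilator.mpr le_rfl, r.act_bot]

lemma le_annihilator_or_le_annihilator (htop : r.act ⊤ ⊤ = ⊤) {y : S} {c d : MaxOf A}
    (h : qmul (qmul c ⊤) d ≤ r.annihilator y) :
    c ≤ r.annihilator y ∨ d ≤ r.annihilator y := by
  refine or_iff_not_imp_left.mpr fun hc => ?_
  rw [← r.act_eq_bot_iff_le_annihilator] at h hc ⊢
  rw [r.qmul_act, r.qmul_act, r.top_act_eq_top htop hc] at h
  exact le_bot_iff.mp (h ▸ r.act_mono_right d le_top)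

universe w

def ofPrime (m : MaxOf A) (hm : ∀ c d : MaxOf A, qmul c d ≤ m ↔ c ≤ m ∨ d ≤ m) :
    IrreducibleRep A (Set PUnit.{w + 1}) where
  act c x := {t ∈ x | ¬ c ≤ m}
  act_sSup c s := by ext; simp; tauto
  sSup_act s x := by ext; simp [sSup_le_iff]
  qmul_act c d x := by ext; simp [hm]; tauto
  irreducible x _ := by
    rcases x.eq_empty_or_nonempty with h | h
    · exact Or.inl h
    · exact Or.inr h.eq_univ

lemma ofPrime_act_univ_eq_empty_iff (m : MaxOf A) (hm : ∀ c d, qmul c d ≤ m ↔ c ≤ m ∨ d ≤ m)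
    (c : MaxOf A) : (ofPrime m hm).act c Set.univ = ∅ ↔ c ≤ m := by
  simp [ofPrime, Set.eq_empty_iff_forall_notMem]

lemma le_iff_le_of_forall_act_eq {a b : MaxOf A}
    (h : ∀ r : IrreducibleRep A (Set PUnit.{w + 1}), r.act a = r.act b)
    (m : MaxOf A) (hm : ∀ c d, qmul c d ≤ m ↔ c ≤ m ∨ d ≤ m) : a ≤ m ↔ b ≤ m := by
  rw [← ofPrime_act_univ_eq_empty_iff m hm, ← ofPrime_act_univ_eq_empty_iff m hm, h]

end IrreducibleRep

end Algebraic

noncomputable instance : CommCStarAlgebra A :=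
  { ‹NormedCommRing A›, ‹StarRing A›, ‹CStarRing A›, ‹CompleteSpace A›,
    ‹NormedAlgebra ℂ A›, ‹StarModule ℂ A› with }

namespace MaxOf

lemma IsIdeal.exists_character_of_notMem {j : MaxOf A} (hj : j.IsIdeal) {f : A} (hf : f ∉ j.1) :
    ∃ χ : characterSpace ℂ A, j ≤ charKer χ ∧ χ f ≠ 0 := by
  let e := gelfandStarTransform A
  let J : Ideal C(characterSpace ℂ A, ℂ) :=
    hj.toIdeal.comap (e.symm : C(characterSpace ℂ A, ℂ) →+* A)
  have hJ : IsClosed (J : Set C(characterSpace ℂ A, ℂ)) :=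
    j.2.preimage (StarAlgEquiv.isometry e.symm).continuous
  have hfJ : e f ∉ ContinuousMap.idealOfSet ℂ (ContinuousMap.setOfIdeal J) := by
    rw [ContinuousMap.idealOfSet_ofIdeal_isClosed hJ]
    simpa [J] using hf
  obtain ⟨χ, hχ, hχf⟩ := ContinuousMap.notMem_idealOfSet.mp hfJ
  refine ⟨χ, fun g hg => (mem_charKer χ).mpr ?_, by simpa [e] using hχf⟩
  simpa [e] using ContinuousMap.notMem_setOfIdeal.mp hχ (f := e g) (by simpa [J] using hg)

lemma exists_apply_eq_one_of_isOpen {U : Set (characterSpace ℂ A)} (hU : IsOpen U)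
    {χ : characterSpace ℂ A} (hχ : χ ∈ U) : ∃ u : A, χ u = 1 ∧ ∀ t ∉ U, t u = 0 := by
  obtain ⟨g, hg0, hg1, -⟩ := exists_continuous_zero_one_of_isClosed hU.isClosed_compl
    isClosed_singleton (Set.disjoint_singleton_right.mpr (· hχ))
  obtain ⟨u, hu⟩ := (gelfandTransform_bijective A).surjective
    ((ContinuousMap.mk ((↑) : ℝ → ℂ) Complex.continuous_ofReal).comp g)
  have hu' (t : characterSpace ℂ A) : t u = g t := by simpa using DFunLike.congr_fun hu t
  exact ⟨u, by simp [hu', hg1 rfl], fun t ht => by simp [hu', hg0 ht]⟩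

lemma exists_mul_eq_zero_of_ne {χ₀ χ₁ : characterSpace ℂ A} (h : χ₀ ≠ χ₁) :
    ∃ u v : A, χ₀ u = 1 ∧ χ₁ v = 1 ∧ u * v = 0 := by
  obtain ⟨U₀, U₁, hU₀, hU₁, h₀, h₁, hdisj⟩ := t2_separation h
  obtain ⟨u, hu, hu0⟩ := exists_apply_eq_one_of_isOpen hU₀ h₀
  obtain ⟨v, hv, hv0⟩ := exists_apply_eq_one_of_isOpen hU₁ h₁
  refine ⟨u, v, hu, hv, (gelfandTransform_bijective A).injective ?_⟩
  ext t
  by_cases ht : t ∈ U₀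
  · simp [hv0 t (hdisj.notMem_of_mem_left ht)]
  · simp [hu0 t ht]

lemma IsIdeal.exists_charKer_le {j : MaxOf A} (hj : j.IsIdeal) (h1 : ¬ unit ≤ j)
    (hprime : ∀ c d, qmul (qmul c ⊤) d ≤ j → c ≤ j ∨ d ≤ j) : ∃ χ, charKer χ ≤ j := by
  obtain ⟨χ₀, hj₀, -⟩ := hj.exists_character_of_notMem (spanSingleton_le_iff.not.mp h1)
  refine ⟨χ₀, fun f hf => by_contra fun hfj => ?_⟩
  obtain ⟨χ₁, hj₁, hχ₁f⟩ := hj.exists_character_of_notMem hfj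
  have hne : χ₀ ≠ χ₁ := by
    rintro rfl
    exact hχ₁f ((mem_charKer χ₀).mp hf)
  obtain ⟨u, v, hu, hv, huv⟩ := exists_mul_eq_zero_of_ne hne
  rcases hprime _ _ ((spanSingleton_qmul_top_qmul_spanSingleton_eq_bot huv).trans_le bot_le) with h | h
  · simpa [hu] using (mem_charKer χ₀).mp (hj₀ (spanSingleton_le_iff.mp h))
  · simpa [hv] using (mem_charKer χ₁).mp (hj₁ (spanSingleton_le_iff.mp h))

lemma qmul_top_qmul_top_le_of_forall_charKer {a b : MaxOf A}
    (h : ∀ χ, b ≤ charKer χ → a ≤ charKer χ) : qmul (qmul ⊤ a) ⊤ ≤ qmul (qmul ⊤ b) ⊤ := by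
  have hb := isIdeal_qmul_top (qmul ⊤ b)
  refine hb.qmul_top_qmul_top_le_iff.mpr fun f hf => by_contra fun hfb => ?_
  obtain ⟨χ, hχ, hχf⟩ := hb.exists_character_of_notMem hfb
  exact hχf ((mem_charKer χ).mp (h χ ((le_qmul_top_qmul_top b).trans hχ) hf))

end MaxOf

namespace IrreducibleRep

open MaxOf

variable {S : Type*} [CompleteLattice S] (r : IrreducibleRep A S)

lemma eq_bot_or_top_of_unit_act (htop : r.act ⊤ ⊤ = ⊤) {y : S} (hy : r.act unit y = y) :
    y = ⊥ ∨ y = ⊤ := by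
  by_cases hy0 : y = ⊥
  · exact Or.inl hy0
  have h1 : ¬ unit ≤ r.annihilator y := by rwa [← r.act_eq_bot_iff_le_annihilator, hy]
  obtain ⟨χ, hχ⟩ := (r.isIdeal_annihilator y).exists_charKer_le h1
    fun _ _ => r.le_annihilator_or_le_annihilator htop
  refine r.irreducible y (le_of_eq ?_)
  rw [← charKer_sup_unit χ, r.sup_act, r.act_eq_bot_iff_le_annihilator.mpr hχ, hy, bot_sup_eq]

lemma qmul_top_qmul_top_act_top (htop : r.act ⊤ ⊤ = ⊤) (c : MaxOf A) :
    r.act (qmul (qmul ⊤ c) ⊤) ⊤ = r.act c ⊤ := by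
  have hc : r.act unit (r.act c ⊤) = r.act c ⊤ := by rw [← r.qmul_act, qmul_unit]
  rw [r.qmul_act, r.qmul_act, htop]
  rcases r.eq_bot_or_top_of_unit_act htop hc with h | h <;> rw [h]
  exacts [r.act_bot ⊤, htop]

lemma act_eq_of_qmul_top_qmul_top_eq {a b : MaxOf A}
    (hab : qmul (qmul ⊤ a) ⊤ = qmul (qmul ⊤ b) ⊤) : r.act a = r.act b := by
  funext x
  rcases r.top_act_eq_bot_or_top ⊤ with hbot | htop
  · have hzero (c : MaxOf A) : r.act c x = ⊥ := le_bot_iff.mp <| hbot ▸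
      (r.act_mono_left le_top x).trans (r.act_mono_right ⊤ le_top)
    rw [hzero, hzero]
  have hunit (c : MaxOf A) : r.act c x = r.act c (r.act unit x) := by
    rw [← r.qmul_act, unit_qmul]
  have hx : r.act unit (r.act unit x) = r.act unit x := by rw [← r.qmul_act, qmul_unit]
  rw [hunit a, hunit b]
  rcases r.eq_bot_or_top_of_unit_act htop hx with h | h <;> rw [h]
  · rw [r.act_bot, r.act_bot]
  · rw [← r.qmul_top_qmul_top_act_top htop a, hab, r.qmul_top_qmul_top_act_top htop b]

end IrreducibleRep

/-- For a commutative unital C*-algebra `A` and `a b ∈ Max A`, all irreducible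
representations of `Max A` (on complete lattices) identify `a` and `b` if and only if
`⊤∘a∘⊤ = ⊤∘b∘⊤`; i.e., the spatialization of `Max A` with respect to all irreducible
representations is the locale of closed two-sided ideals of `A`, with quotient map
`a ↦ ⊤∘a∘⊤`. -/
theorem maxOf_spatialization_eq_closed_ideals (a b : MaxOf A) :
    (∀ (S : Type u) [CompleteLattice S] (p : MaxOf A → S → S),
        (∀ (c : MaxOf A) (s : Set S), p c (sSup s) = ⨆ x ∈ s, p c x) →
        (∀ (s : Set (MaxOf A)) (x : S), p (sSup s) x = ⨆ c ∈ s, p c x) →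
        (∀ (c d : MaxOf A) (x : S), p (qmul c d) x = p d (p c x)) →
        (∀ x : S, p ⊤ x ≤ x → x = ⊥ ∨ x = ⊤) →
        p a = p b) ↔
      qmul (qmul ⊤ a) ⊤ = qmul (qmul ⊤ b) ⊤ := by
  constructor
  · intro h
    have hker (χ : characterSpace ℂ A) : a ≤ MaxOf.charKer χ ↔ b ≤ MaxOf.charKer χ :=
      IrreducibleRep.le_iff_le_of_forall_act_eq
        (fun r => h _ r.act r.act_sSup r.sSup_act r.qmul_act r.irreducible) _
        fun _ _ => MaxOf.qmul_le_charKer_iff χ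
    exact le_antisymm (MaxOf.qmul_top_qmul_top_le_of_forall_charKer fun χ => (hker χ).mpr)
      (MaxOf.qmul_top_qmul_top_le_of_forall_charKer fun χ => (hker χ).mp)
  · intro hab S _ p h₁ h₂ h₃ h₄
    exact IrreducibleRep.act_eq_of_qmul_top_qmul_top_eq ⟨p, h₁, h₂, h₃, h₄⟩ hab
end

section
/- Let Q be a unital quantale whose unit e is its top element ⊤. Let L and M be frames, and let f : L → Q and g : M → Q be maps preserving arbitrary suprema (hence f(⊥) = ⊥ and g(⊥) = ⊥) and satisfying f(a ⊓ a') = f(a)∘f(a') for all a, a' ∈ L, g(b ⊓ b') = g(b)∘g(b') for all b, b' ∈ M, and g(⊤_M) = ⊤. If M is a regular frame, then f(a)∘g(b) = g(b)∘f(a) for all a ∈ L and b ∈ M. -/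
/-!
Write `b' ≺ b` for `b'` well inside `b`, witnessed by `c` with `b' ⊓ c = ⊥` and `b ⊔ c = ⊤`.
Then `g b ⊔ g c = ⊤ = e` and `g c ∘ g b' = g b' ∘ g c = ⊥`, so for any `x ∈ Q`
`x ∘ g b' = (g b ⊔ g c) ∘ x ∘ g b' ≤ g b ∘ x`, and symmetrically `g b' ∘ x ≤ x ∘ g b`.
Regularity writes `g b` as the join of the `g b'` with `b' ≺ b`, so `g b` commutes with every
element of `Q`, in particular with `f a`.
-/

structure TopUnitalSupDistrib {Q : Type*} [CompleteLattice Q] (mul : Q → Q → Q) : Prop where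
  mul_sSup : ∀ (a : Q) (s : Set Q), mul a (sSup s) = ⨆ b ∈ s, mul a b
  sSup_mul : ∀ (s : Set Q) (b : Q), mul (sSup s) b = ⨆ a ∈ s, mul a b
  top_mul : ∀ a : Q, mul ⊤ a = a
  mul_top : ∀ a : Q, mul a ⊤ = a

namespace TopUnitalSupDistrib

variable {Q : Type*} [CompleteLattice Q] {mul : Q → Q → Q}

theorem mul_sup (h : TopUnitalSupDistrib mul) (a x y : Q) :
    mul a (x ⊔ y) = mul a x ⊔ mul a y := by
  rw [← sSup_pair, h.mul_sSup, iSup_pair]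

theorem sup_mul (h : TopUnitalSupDistrib mul) (x y a : Q) :
    mul (x ⊔ y) a = mul x a ⊔ mul y a := by
  rw [← sSup_pair, h.sSup_mul, iSup_pair]

theorem mul_le_mul_left (h : TopUnitalSupDistrib mul) (a : Q) {x y : Q} (hxy : x ≤ y) :
    mul a x ≤ mul a y := by
  rw [← sup_eq_right.mpr hxy, h.mul_sup]
  exact le_sup_left

theorem mul_le_mul_right (h : TopUnitalSupDistrib mul) (a : Q) {x y : Q} (hxy : x ≤ y) :
    mul x a ≤ mul y a := by
  rw [← sup_eq_right.mpr hxy, h.sup_mul]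
  exact le_sup_left

theorem mul_le_mul_swap_of_sup_eq_top (h : TopUnitalSupDistrib mul) {b c w : Q}
    (hbc : b ⊔ c = ⊤) (hcw : mul c w = ⊥) (x : Q) : mul x w ≤ mul b x := by
  have hc : mul c (mul x w) = ⊥ := by
    refine le_bot_iff.mp ?_
    calc mul c (mul x w) ≤ mul c (mul ⊤ w) := h.mul_le_mul_left c (h.mul_le_mul_right w le_top)
      _ = ⊥ := by rw [h.top_mul, hcw]
  calc mul x w = mul b (mul x w) ⊔ mul c (mul x w) := by rw [← h.sup_mul, hbc, h.top_mul]
    _ = mul b (mul x w) := by rw [hc, sup_bot_eq]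
    _ ≤ mul b (mul x ⊤) := h.mul_le_mul_left b (h.mul_le_mul_left x le_top)
    _ = mul b x := by rw [h.mul_top]

theorem mul_le_mul_swap_of_sup_eq_top' (h : TopUnitalSupDistrib mul) {b c w : Q}
    (hbc : b ⊔ c = ⊤) (hwc : mul w c = ⊥) (x : Q) : mul w x ≤ mul x b := by
  have hc : mul (mul w x) c = ⊥ := by
    refine le_bot_iff.mp ?_
    calc mul (mul w x) c ≤ mul (mul w ⊤) c := h.mul_le_mul_right c (h.mul_le_mul_left w le_top)
      _ = ⊥ := by rw [h.mul_top, hwc]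
  calc mul w x = mul (mul w x) b ⊔ mul (mul w x) c := by rw [← h.mul_sup, hbc, h.mul_top]
    _ = mul (mul w x) b := by rw [hc, sup_bot_eq]
    _ ≤ mul (mul ⊤ x) b := h.mul_le_mul_right b (h.mul_le_mul_right x le_top)
    _ = mul x b := by rw [h.top_mul]

theorem mul_comm_of_eq_sSup (h : TopUnitalSupDistrib mul) {y : Q} {S : Set Q}
    (hy : y = sSup S) (hS : ∀ w ∈ S, ∃ c, y ⊔ c = ⊤ ∧ mul c w = ⊥ ∧ mul w c = ⊥) (x : Q) :
    mul x y = mul y x := by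
  apply le_antisymm
  · conv_lhs => rw [hy]
    rw [h.mul_sSup]
    refine iSup₂_le fun w hw => ?_
    obtain ⟨c, hyc, hcw, -⟩ := hS w hw
    exact h.mul_le_mul_swap_of_sup_eq_top hyc hcw x
  · conv_lhs => rw [hy]
    rw [h.sSup_mul]
    refine iSup₂_le fun w hw => ?_
    obtain ⟨c, hyc, -, hwc⟩ := hS w hw
    exact h.mul_le_mul_swap_of_sup_eq_top' hyc hwc x

end TopUnitalSupDistrib

section SupHom

variable {M Q : Type*} [CompleteLattice M] [CompleteLattice Q] {g : M → Q}

theorem map_bot_of_map_sSup (hg : ∀ s : Set M, g (sSup s) = ⨆ b ∈ s, g b) : g ⊥ = ⊥ := by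
  simpa using hg ∅

theorem map_sup_of_map_sSup (hg : ∀ s : Set M, g (sSup s) = ⨆ b ∈ s, g b) (x y : M) :
    g (x ⊔ y) = g x ⊔ g y := by
  rw [← sSup_pair, hg, iSup_pair]

end SupHom

theorem images_commute_of_regular_frame_general
    {Q L M : Type*} [CompleteLattice Q] [Order.Frame M]
    (mul : Q → Q → Q)
    (hdistl : ∀ (a : Q) (s : Set Q), mul a (sSup s) = ⨆ b ∈ s, mul a b)
    (hdistr : ∀ (s : Set Q) (b : Q), mul (sSup s) b = ⨆ a ∈ s, mul a b)
    (hel : ∀ a : Q, mul ⊤ a = a) (her : ∀ a : Q, mul a ⊤ = a)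
    (f : L → Q) (g : M → Q)
    (hg : ∀ s : Set M, g (sSup s) = ⨆ b ∈ s, g b)
    (hgm : ∀ b b' : M, g (b ⊓ b') = mul (g b) (g b'))
    (hgtop : g ⊤ = ⊤)
    (hreg : ∀ b : M, b = ⨆ b' ∈ {b' : M | ∃ c, b' ⊓ c = ⊥ ∧ b ⊔ c = ⊤}, b') :
    ∀ (a : L) (b : M), mul (f a) (g b) = mul (g b) (f a) := by
  intro a b
  have hQ : TopUnitalSupDistrib mul := ⟨hdistl, hdistr, hel, her⟩
  set S : Set M := {b' : M | ∃ c, b' ⊓ c = ⊥ ∧ b ⊔ c = ⊤}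
  have hgb : g b = sSup (g '' S) := by
    conv_lhs => rw [hreg b, ← sSup_eq_iSup, hg]
    rw [sSup_image]
  refine hQ.mul_comm_of_eq_sSup hgb ?_ (f a)
  rintro _ ⟨b', ⟨c, hb'c, hbc⟩, rfl⟩
  refine ⟨g c, ?_, ?_, ?_⟩
  · rw [← map_sup_of_map_sSup hg, hbc, hgtop]
  · rw [← hgm, inf_comm, hb'c, map_bot_of_map_sSup hg]
  · rw [← hgm, hb'c, map_bot_of_map_sSup hg]

/-- Let `Q` be a unital quantale whose unit is the top element, and let
`f : L → Q`, `g : M → Q` be sup-preserving maps from frames `L`, `M` turning binary meets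
into the quantale multiplication, with `g ⊤ = ⊤`. If `M` is a regular frame then the
images of `f` and `g` commute elementwise. -/
theorem images_commute_of_regular_frame
    {Q L M : Type*} [CompleteLattice Q] [Order.Frame L] [Order.Frame M]
    (mul : Q → Q → Q)
    (hassoc : ∀ a b c : Q, mul (mul a b) c = mul a (mul b c))
    (hdistl : ∀ (a : Q) (s : Set Q), mul a (sSup s) = ⨆ b ∈ s, mul a b)
    (hdistr : ∀ (s : Set Q) (b : Q), mul (sSup s) b = ⨆ a ∈ s, mul a b)
    (hel : ∀ a : Q, mul ⊤ a = a) (her : ∀ a : Q, mul a ⊤ = a)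
    (f : L → Q) (g : M → Q)
    (hf : ∀ s : Set L, f (sSup s) = ⨆ a ∈ s, f a)
    (hg : ∀ s : Set M, g (sSup s) = ⨆ b ∈ s, g b)
    (hfm : ∀ a a' : L, f (a ⊓ a') = mul (f a) (f a'))
    (hgm : ∀ b b' : M, g (b ⊓ b') = mul (g b) (g b'))
    (hgtop : g ⊤ = ⊤)
    (hreg : ∀ b : M, b = ⨆ b' ∈ {b' : M | ∃ c, b' ⊓ c = ⊥ ∧ b ⊔ c = ⊤}, b') :
    ∀ (a : L) (b : M), mul (f a) (g b) = mul (g b) (f a) :=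
  images_commute_of_regular_frame_general mul hdistl hdistr hel her f g hg hgm hgtop hreg
end

section
/- Let γ₁, γ₂ : ℂ² → ℂ⁴ be the unital *-homomorphisms of C*-algebras given by γ₁(z, w) = (z, z, w, w) and γ₂(z, w) = (z, w, z, w). Let S be the smallest subset of Max ℂ⁴ that contains the image γ₁[M] and γ₂[M] of every linear subspace M of ℂ², contains the unit ℂ·(1,1,1,1), and is closed under the quantale multiplication M∘N, arbitrary joins, and the involution M*. Then S does not contain the one-dimensional subspace ℂ·(1, 0, 1, 1). (Hence the unital involutive subquantale of Max ℂ⁴ generated by the images of Max γ₁ and Max γ₂ is a proper subquantale of Max ℂ⁴, and Max does not preserve the coproduct ℂ² + ℂ² of unital C*-algebras.) -/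
abbrev C4 := Fin 4 → ℂ

/-- The *-homomorphism `γ₁(z, w) = (z, z, w, w)` from `ℂ²` to `ℂ⁴`, as a linear map. -/
noncomputable def g1 : (ℂ × ℂ) →ₗ[ℂ] C4 where
  toFun z := ![z.1, z.1, z.2, z.2]
  map_add' a b := by
    funext i
    fin_cases i <;> simp
  map_smul' c a := by
    funext i
    fin_cases i <;> simp

/-- The *-homomorphism `γ₂(z, w) = (z, w, z, w)` from `ℂ²` to `ℂ⁴`, as a linear map. -/
noncomputable def g2 : (ℂ × ℂ) →ₗ[ℂ] C4 where
  toFun z := ![z.1, z.2, z.1, z.2]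
  map_add' a b := by
    funext i
    fin_cases i <;> simp
  map_smul' c a := by
    funext i
    fin_cases i <;> simp

/-- The involution of `Max ℂ⁴` : `M* = {m* : m ∈ M}`, described via `a ∈ M* ↔ a* ∈ M`. -/
noncomputable def qstar (M : Submodule ℂ C4) : Submodule ℂ C4 where
  carrier := {a : C4 | star a ∈ M}
  add_mem' := fun ha hb => by simpa [star_add] using M.add_mem ha hb
  zero_mem' := by simpa using M.zero_mem
  smul_mem' := fun c a ha => by simpa [star_smul] using M.smul_mem (star c) ha

/-- The smallest subset of `Max ℂ⁴` containing the images under `Max γ₁` and `Max γ₂` of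
all linear subspaces of `ℂ²` and the unit `ℂ·(1,1,1,1)`, and closed under the quantale
multiplication, arbitrary joins, and the involution. -/
inductive GenS : Submodule ℂ C4 → Prop
  | img1 (M : Submodule ℂ (ℂ × ℂ)) : GenS ((M.map g1).topologicalClosure)
  | img2 (M : Submodule ℂ (ℂ × ℂ)) : GenS ((M.map g2).topologicalClosure)
  | unit : GenS (Submodule.span ℂ {(1 : C4)})
  | mul {M N : Submodule ℂ C4} : GenS M → GenS N → GenS ((M * N).topologicalClosure)
  | star {M : Submodule ℂ C4} : GenS M → GenS (qstar M)
  | join (s : Set (Submodule ℂ C4)) :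
      (∀ M ∈ s, GenS M) → GenS ((sSup s).topologicalClosure)

/-!
Identify `ℂ⁴` with `ℂ² ⊗ ℂ²` by reading `a` as the matrix `[[a 0, a 1], [a 2, a 3]]`; the pure
tensors are then the `a` with `a 0 * a 3 = a 1 * a 2`. Every element of the images of `γ₁`, `γ₂`
and of the unit is a pure tensor, and pure tensors are closed under the coordinatewise product and
conjugation. Hence every subspace in the generated family is spanned by the pure tensors it
contains. The only pure tensor in `ℂ·(1, 0, 1, 1)` is `0`.
-/

open Pointwise

namespace Submodule

variable {R E F : Type*}

section Module

variable [CommSemiring R] [AddCommMonoid E] [Module R E]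

def SpannedBy (P : Set E) (M : Submodule R E) : Prop :=
  M ≤ span R ((M : Set E) ∩ P)

variable {P : Set E}

theorem spannedBy_of_subset {M : Submodule R E} (h : (M : Set E) ⊆ P) : M.SpannedBy P := by
  rw [SpannedBy, Set.inter_eq_left.mpr h, span_eq]

theorem spannedBy_sSup {s : Set (Submodule R E)} (h : ∀ M ∈ s, M.SpannedBy P) :
    (sSup s).SpannedBy P :=
  sSup_le fun M hM =>
    (h M hM).trans (span_mono (Set.inter_subset_inter_left P (le_sSup hM)))

theorem SpannedBy.map [AddCommMonoid F] [Module R F] {σ : R →+* R} [RingHomSurjective σ]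
    {Q : Set F} {M : Submodule R E} (hM : M.SpannedBy P) (f : E →ₛₗ[σ] F)
    (hf : ∀ a ∈ P, f a ∈ Q) : (M.map f).SpannedBy Q := by
  calc M.map f ≤ (span R ((M : Set E) ∩ P)).map f := map_mono hM
    _ = span R (f '' ((M : Set E) ∩ P)) := map_span f _
    _ ≤ span R (((M.map f : Submodule R F) : Set F) ∩ Q) :=
        span_mono (Set.image_subset_iff.mpr fun a ha => ⟨mem_map_of_mem ha.1, hf a ha.2⟩)

theorem SpannedBy.eq_bot {M : Submodule R E} (hM : M.SpannedBy P)
    (h : (M : Set E) ∩ P ⊆ {0}) : M = ⊥ :=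
  eq_bot_iff.mpr (hM.trans ((span_mono h).trans (span_zero_singleton R).le))

end Module

theorem SpannedBy.mul [CommSemiring R] [Semiring E] [Algebra R E] {P : Set E}
    (hP : ∀ a ∈ P, ∀ b ∈ P, a * b ∈ P) {M N : Submodule R E} (hM : M.SpannedBy P)
    (hN : N.SpannedBy P) : (M * N).SpannedBy P := by
  calc M * N ≤ span R ((M : Set E) ∩ P) * span R ((N : Set E) ∩ P) := mul_le_mul' hM hN
    _ = span R (((M : Set E) ∩ P) * ((N : Set E) ∩ P)) := span_mul_span R _ _
    _ ≤ span R (((M * N : Submodule R E) : Set E) ∩ P) := by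
        refine span_mono ?_
        rintro _ ⟨a, ha, b, hb, rfl⟩
        exact ⟨mul_mem_mul ha.1 hb.1, hP a ha.2 b hb.2⟩

end Submodule

open Submodule

def pureTensors : Set C4 := {a | a 0 * a 3 = a 1 * a 2}

theorem mul_mem_pureTensors {a b : C4} (ha : a ∈ pureTensors) (hb : b ∈ pureTensors) :
    a * b ∈ pureTensors := by
  simp only [pureTensors, Set.mem_ofPred_eq, Pi.mul_apply] at *
  linear_combination b 0 * b 3 * ha + a 1 * a 2 * hb

theorem star_mem_pureTensors {a : C4} (ha : a ∈ pureTensors) : star a ∈ pureTensors := by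
  simp only [pureTensors, Set.mem_ofPred_eq, Pi.star_apply] at *
  rw [← star_mul', ← star_mul', ha]

theorem g1_mem_pureTensors (z : ℂ × ℂ) : g1 z ∈ pureTensors := by
  simp [pureTensors, g1]

theorem g2_mem_pureTensors (z : ℂ × ℂ) : g2 z ∈ pureTensors := by
  simp [pureTensors, g2, mul_comm]

theorem smul_one_mem_pureTensors (c : ℂ) : c • (1 : C4) ∈ pureTensors := by
  simp [pureTensors]

theorem qstar_eq_map (M : Submodule ℂ C4) :
    qstar M = M.map (starLinearEquiv ℂ (A := C4)).toLinearMap := by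
  ext a
  simp [qstar]

theorem topologicalClosure_eq_self (M : Submodule ℂ C4) : M.topologicalClosure = M :=
  SetLike.coe_injective M.closed_of_finiteDimensional.closure_eq

theorem spannedBy_pureTensors_of_genS {M : Submodule ℂ C4} (h : GenS M) :
    M.SpannedBy pureTensors := by
  induction h with
  | img1 M =>
    rw [topologicalClosure_eq_self]
    exact spannedBy_of_subset (by rintro _ ⟨z, -, rfl⟩; exact g1_mem_pureTensors z)
  | img2 M =>
    rw [topologicalClosure_eq_self]
    exact spannedBy_of_subset (by rintro _ ⟨z, -, rfl⟩; exact g2_mem_pureTensors z)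
  | unit =>
    refine spannedBy_of_subset ?_
    rintro _ hx
    obtain ⟨c, rfl⟩ := mem_span_singleton.mp hx
    exact smul_one_mem_pureTensors c
  | mul _ _ ihM ihN =>
    rw [topologicalClosure_eq_self]
    exact ihM.mul (fun _ ha _ hb => mul_mem_pureTensors ha hb) ihN
  | star _ ihM =>
    rw [qstar_eq_map]
    exact ihM.map _ fun _ => star_mem_pureTensors
  | join s _ ihs =>
    rw [topologicalClosure_eq_self]
    exact spannedBy_sSup ihs

theorem span_singleton_inter_pureTensors_subset_zero :
    ((ℂ ∙ (![1, 0, 1, 1] : C4) : Submodule ℂ C4) : Set C4) ∩ pureTensors ⊆ {0} := by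
  rintro _ ⟨hx, hpure⟩
  obtain ⟨c, rfl⟩ := mem_span_singleton.mp hx
  have hc : c * c = 0 := by simpa [pureTensors] using hpure
  simpa using mul_self_eq_zero.mp hc

/-- the unital involutive subquantale of `Max ℂ⁴` generated by the images of
`Max γ₁` and `Max γ₂` does not contain the one-dimensional subspace `ℂ·(1, 0, 1, 1)`.
(Hence it is a proper subquantale of `Max ℂ⁴`, and `Max` does not preserve the coproduct
`ℂ² + ℂ²` of unital C*-algebras.) -/
theorem generated_subquantale_proper :
    ¬ GenS (Submodule.span ℂ {(![1, 0, 1, 1] : C4)}) := by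
  intro h
  have hbot := (spannedBy_pureTensors_of_genS h).eq_bot span_singleton_inter_pureTensors_subset_zero
  have hv : (![1, 0, 1, 1] : C4) = 0 := span_singleton_eq_bot.mp hbot
  simpa using congr_fun hv 0
end

section
/- The functor Max is faithful: if A and B are unital C*-algebras and f, g : A → B are unital *-homomorphisms such that for every closed linear subspace M of A the closure of f[M] equals the closure of g[M] (i.e., Max f = Max g), then f = g. -/
/-! Applying `Max f = Max g` to the closed line `ℂ ∙ x` shows that `g x` is a multiple of
`f x` for every `x`. For linear maps this already forces `g = f` as soon as they agree on
a vector `u` with `f u ≠ 0`, here `u = 1`: if `f x` is independent of `f u`, comparing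
`g x` and `g (x + u)` makes both scalars equal to `1`; if `f x = μ • f u`, then
`x - μ • u` lies in the kernel of `f`, hence in that of `g`. -/

theorem LinearMap.eq_of_forall_mem_span_singleton {K V W : Type*} [Field K]
    [AddCommGroup V] [Module K V] [AddCommGroup W] [Module K W]
    {f g : V →ₗ[K] W} {u : V} (hu : f u ≠ 0) (hfg : f u = g u)
    (h : ∀ x, g x ∈ K ∙ f x) : f = g := by
  ext x
  obtain ⟨c, hc⟩ := Submodule.mem_span_singleton.1 (h x)
  by_cases hind : LinearIndependent K ![f u, f x]
  · obtain ⟨d, hd⟩ := Submodule.mem_span_singleton.1 (h (x + u))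
    rw [map_add, map_add, ← hc, ← hfg] at hd
    have hzero : (1 - d) • f u + (c - d) • f x = 0 := by
      linear_combination (norm := module) -hd
    obtain ⟨hd1, hcd⟩ := LinearIndependent.pair_iff.1 hind _ _ hzero
    rw [← hc, sub_eq_zero.1 hcd, ← sub_eq_zero.1 hd1, one_smul]
  · obtain ⟨μ, hμ⟩ : ∃ μ : K, μ • f u = f x := by
      simpa [LinearIndependent.pair_iff' hu] using hind
    have hf : f (x - μ • u) = 0 := by rw [map_sub, map_smul, hμ, sub_self]
    have hg : g (x - μ • u) = 0 := by
      simpa [hf] using h (x - μ • u)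
    rw [map_sub, map_smul, sub_eq_zero] at hg
    rw [hg, ← hfg, hμ]

theorem Submodule.span_singleton_eq_of_map_topologicalClosure_eq {𝕜 E F : Type*}
    [NontriviallyNormedField 𝕜] [CompleteSpace 𝕜]
    [AddCommGroup E] [TopologicalSpace E] [IsTopologicalAddGroup E] [Module 𝕜 E]
    [ContinuousSMul 𝕜 E] [T2Space E]
    [AddCommGroup F] [TopologicalSpace F] [IsTopologicalAddGroup F] [Module 𝕜 F]
    [ContinuousSMul 𝕜 F] [T2Space F] {f g : E →ₗ[𝕜] F}
    (h : ∀ M : Submodule 𝕜 E, IsClosed (M : Set E) →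
      (M.map f).topologicalClosure = (M.map g).topologicalClosure) (x : E) :
    𝕜 ∙ f x = 𝕜 ∙ g x := by
  have hx := h (𝕜 ∙ x) (Submodule.closed_of_finiteDimensional _)
  rwa [Submodule.map_span, Submodule.map_span, Set.image_singleton, Set.image_singleton,
    (Submodule.closed_of_finiteDimensional (𝕜 ∙ f x)).submodule_topologicalClosure_eq,
    (Submodule.closed_of_finiteDimensional (𝕜 ∙ g x)).submodule_topologicalClosure_eq] at hx

theorem max_faithful_general
    {A B : Type*}
    [NormedRing A] [StarRing A]
    [NormedAlgebra ℂ A]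
    [NormedRing B] [StarRing B]
    [NormedAlgebra ℂ B]
    (f g : A →⋆ₐ[ℂ] B)
    (h : ∀ M : Submodule ℂ A, IsClosed (M : Set A) →
      (M.map f.toAlgHom.toLinearMap).topologicalClosure =
        (M.map g.toAlgHom.toLinearMap).topologicalClosure) :
    f = g := by
  rcases subsingleton_or_nontrivial B with hB | hB
  · ext a
    exact Subsingleton.elim _ _
  have hlin : f.toAlgHom.toLinearMap = g.toAlgHom.toLinearMap := by
    refine LinearMap.eq_of_forall_mem_span_singleton (u := 1) (by simp) (by simp) fun x => ?_
    rw [Submodule.span_singleton_eq_of_map_topologicalClosure_eq h x]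
    exact Submodule.mem_span_singleton_self _
  ext a
  exact LinearMap.congr_fun hlin a

/-- the functor `Max` is faithful: if two unital *-homomorphisms `f, g` of
unital C*-algebras induce the same map on closed linear subspaces (`Max f = Max g`, where
`Max f` sends a closed subspace `M` to the closure of `f[M]`), then `f = g`. -/
theorem max_faithful
    {A B : Type*}
    [NormedRing A] [StarRing A] [CStarRing A] [CompleteSpace A]
    [NormedAlgebra ℂ A] [StarModule ℂ A]
    [NormedRing B] [StarRing B] [CStarRing B] [CompleteSpace B]
    [NormedAlgebra ℂ B] [StarModule ℂ B]
    (f g : A →⋆ₐ[ℂ] B)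
    (h : ∀ M : Submodule ℂ A, IsClosed (M : Set A) →
      (M.map f.toAlgHom.toLinearMap).topologicalClosure =
        (M.map g.toAlgHom.toLinearMap).topologicalClosure) :
    f = g :=
  max_faithful_general f g h
end
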